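/- Let A, B, C, D be bounded linear operators on G and let Λ be a self-adjoint linear relation on G such that Λ = Λ^{A,B} = Λ^{C,D}. If the pair (A,B) is normalized, then there exists a bounded injective linear operator L on G such that C = L A and D = L B. -/

import Mathlib

open ContinuousLinearMap

variable {G : Type*} [NormedAddCommGroup G] [InnerProductSpace ℂ G] [CompleteSpace G]

/-- The operator `M^{A,B}` on `G × G`, `(x₁,x₂) ↦ (A x₁ - B x₂, B x₁ + A x₂)`. -/
noncomputable def MAB (A B : G →L[ℂ] G) : (G × G) →L[ℂ] (G × G) :=
  ((A.comp (fst ℂ G G)) - (B.comp (snd ℂ G G))).prod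
    ((B.comp (fst ℂ G G)) + (A.comp (snd ℂ G G)))

/-- The linear relation `Λ^{A,B} = {(x₁,x₂) : A x₁ = B x₂}`. -/
def LambdaAB (A B : G →L[ℂ] G) : Submodule ℂ (G × G) where
  carrier := {p | A p.1 = B p.2}
  add_mem' := by
    intro a b ha hb
    simp only [Set.mem_setOf_eq] at *
    simp [ha, hb]
  zero_mem' := by simp
  smul_mem' := by
    intro c p hp
    simp only [Set.mem_setOf_eq] at *
    simp [hp]

/-- The adjoint of a linear relation. -/
def relAdjoint (Λ : Submodule ℂ (G × G)) : Submodule ℂ (G × G) where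
  carrier := {p | ∀ q ∈ Λ, (inner ℂ p.1 q.2 : ℂ) = inner ℂ p.2 q.1}
  add_mem' := by
    intro a b ha hb q hq
    simp [inner_add_left, ha q hq, hb q hq]
  zero_mem' := by
    intro q hq; simp
  smul_mem' := by
    intro c p hp q hq
    simp [inner_smul_left, hp q hq]

/-- A linear relation is self-adjoint if it equals its adjoint. -/
def IsSelfAdjointRel (Λ : Submodule ℂ (G × G)) : Prop := relAdjoint Λ = Λ

/-- A bounded operator is boundedly invertible if it has a bounded two-sided inverse. -/
def IsBoundedlyInvertible {E F : Type*} [NormedAddCommGroup E] [NormedSpace ℂ E]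
    [NormedAddCommGroup F] [NormedSpace ℂ F] (T : E →L[ℂ] F) : Prop :=
  ∃ T' : F →L[ℂ] E, (∀ x, T' (T x) = x) ∧ (∀ y, T (T' y) = y)

/-- The pair `(A,B)` is normalized if `A B* = B A*` and `M^{A,B}` is boundedly invertible. -/
noncomputable def IsNormalized (A B : G →L[ℂ] G) : Prop :=
  A ∘L adjoint B = B ∘L adjoint A ∧ IsBoundedlyInvertible (MAB A B)

/-!
`Λ^{A,B}` is the kernel of the row operator `[A, -B] : G × G → G`, the first row of `M^{A,B}`;
so when `M^{A,B}` is boundedly invertible, `[A, -B]` has a bounded right inverse `P`. As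
`[A, -B]` and `[C, -D]` have the same kernel `Λ`, the operator `L := [C, -D] ∘ P` is injective
and satisfies `L ∘ [A, -B] = [C, -D]`; evaluating at `(x, 0)` and `(0, -x)` gives `C = L A` and
`D = L B`.
-/

section RightInverse

variable {R E F H : Type*} [Ring R]
  [TopologicalSpace E] [AddCommGroup E] [Module R E]
  [TopologicalSpace F] [AddCommGroup F] [Module R F]
  [TopologicalSpace H] [AddCommGroup H] [Module R H]
  {T : E →L[R] F} {S : E →L[R] H} {P : F →L[R] E}

theorem comp_rightInverse_comp_eq_of_ker_le (hP : Function.RightInverse P T)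
    (hker : LinearMap.ker (T : E →ₗ[R] F) ≤ LinearMap.ker (S : E →ₗ[R] H)) :
    (S ∘L P) ∘L T = S := by
  ext x
  have hx : T (P (T x) - x) = 0 := by rw [map_sub, hP, sub_self]
  simpa [sub_eq_zero] using hker hx

theorem injective_comp_rightInverse_of_ker_le (hP : Function.RightInverse P T)
    (hker : LinearMap.ker (S : E →ₗ[R] H) ≤ LinearMap.ker (T : E →ₗ[R] F)) :
    Function.Injective (S ∘L P) := by
  refine (injective_iff_map_eq_zero _).2 fun y hy => ?_
  simpa [hP y] using hker hy

theorem exists_injective_comp_eq_of_ker_eq (hP : Function.RightInverse P T)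
    (hker : LinearMap.ker (T : E →ₗ[R] F) = LinearMap.ker (S : E →ₗ[R] H)) :
    ∃ L : F →L[R] H, Function.Injective L ∧ L ∘L T = S :=
  ⟨S ∘L P, injective_comp_rightInverse_of_ker_le hP hker.ge,
    comp_rightInverse_comp_eq_of_ker_le hP hker.le⟩

end RightInverse

section RowOp

variable {R E F : Type*} [Ring R]
  [TopologicalSpace E] [AddCommGroup E] [Module R E]
  [TopologicalSpace F] [AddCommGroup F] [Module R F] [IsTopologicalAddGroup F]

def rowOp (A B : E →L[R] F) : E × E →L[R] F := A ∘L fst R E E - B ∘L snd R E E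

@[simp]
theorem rowOp_apply (A B : E →L[R] F) (x : E × E) : rowOp A B x = A x.1 - B x.2 := rfl

end RowOp

section InnerProductSpace

variable {E : Type*} [NormedAddCommGroup E] [InnerProductSpace ℂ E]

theorem ker_rowOp (A B : E →L[ℂ] E) :
    LinearMap.ker (rowOp A B : E × E →ₗ[ℂ] E) = LambdaAB A B := by
  ext x
  simp [LambdaAB, sub_eq_zero]

theorem exists_rightInverse_rowOp {A B : E →L[ℂ] E} (h : IsBoundedlyInvertible (MAB A B)) :
    ∃ P : E →L[ℂ] E × E, Function.RightInverse P (rowOp A B) := by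
  obtain ⟨M', -, hM'⟩ := h
  exact ⟨M' ∘L inl ℂ E E, fun y => congrArg Prod.fst (hM' (y, 0))⟩

end InnerProductSpace

theorem exists_injective_factor_of_normalized (A B C D : G →L[ℂ] G)
    (Λ : Submodule ℂ (G × G))
    (hAB : Λ = LambdaAB A B) (hCD : Λ = LambdaAB C D)
    (hnorm : IsNormalized A B) :
    ∃ L : G →L[ℂ] G, Function.Injective L ∧ C = L ∘L A ∧ D = L ∘L B := by
  obtain ⟨P, hP⟩ := exists_rightInverse_rowOp hnorm.2
  have hker : LinearMap.ker (rowOp A B : G × G →ₗ[ℂ] G) =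
      LinearMap.ker (rowOp C D : G × G →ₗ[ℂ] G) := by
    rw [ker_rowOp, ker_rowOp, ← hAB, ← hCD]
  obtain ⟨L, hL_inj, hL⟩ := exists_injective_comp_eq_of_ker_eq hP hker
  refine ⟨L, hL_inj, ?_, ?_⟩
  · ext x
    simpa using congr($hL (x, 0)).symm
  · ext x
    simpa using congr($hL (0, -x)).symm
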